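/- arXiv:1701.00254 — 5 statements merged into one kernel-verified Lean document; each statement's English description precedes it below -/
import Mathlib

section
/- Assume p is a prime not dividing D. Let S2 be a finite subset of M(Δ) and let Q1, ..., Qk be points of M(Δ) whose weights w(Qi) are integers. Let S1 be the multiset obtained as the disjoint union of S2 with the k translates □^Int + Q1, ..., □^Int + Qk of the lattice points of the fundamental parallelogram. Then h2(S1) = h2(S2). -/
open Finset

noncomputable section

/-- The weight of a lattice point `P`: `w(P) = ((b1-b2)*x + (a2-a1)*y) / D`
where `D = a2*b1 - a1*b2`. -/
def wt (a1 b1 a2 b2 : ℤ) (P : ℤ × ℤ) : ℚ :=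
  (((b1 - b2) * P.1 + (a2 - a1) * P.2 : ℤ) : ℚ) / ((a2 * b1 - a1 * b2 : ℤ) : ℚ)

/-- The lattice points of the cone spanned by the triangle with vertices
`O`, `P1 = (a1,b1)`, `P2 = (a2,b2)`. -/
def MDelta (a1 b1 a2 b2 : ℤ) : Set (ℤ × ℤ) :=
  {P | ∃ s t : ℚ, 0 ≤ s ∧ 0 ≤ t ∧
    (P.1 : ℚ) = s * a1 + t * a2 ∧ (P.2 : ℚ) = s * b1 + t * b2}

/-- The lattice generated by `P1` and `P2`. -/
def Lambda (a1 b1 a2 b2 : ℤ) : Set (ℤ × ℤ) :=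
  {P | ∃ m n : ℤ, P = (m * a1 + n * a2, m * b1 + n * b2)}

/-- The lattice points of the fundamental parallelogram
`{s*P1 + t*P2 : 0 ≤ s,t < 1}`. -/
def squareInt (a1 b1 a2 b2 : ℤ) : Set (ℤ × ℤ) :=
  {P | ∃ s t : ℚ, 0 ≤ s ∧ s < 1 ∧ 0 ≤ t ∧ t < 1 ∧
    (P.1 : ℚ) = s * a1 + t * a2 ∧ (P.2 : ℚ) = s * b1 + t * b2}

/-- `h(S, τ) = Σ_{P ∈ S} ⌈w(p·τ(P) - P)⌉` for a multiset indexed by `f` and a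
permutation `τ` of the indices. -/
def hTau (p a1 b1 a2 b2 : ℤ) {n : ℕ} (f : Fin n → ℤ × ℤ)
    (τ : Equiv.Perm (Fin n)) : ℤ :=
  ∑ i, ⌈wt a1 b1 a2 b2 (p • f (τ i) - f i)⌉

/-- `h2(S, τ) = Σ_{P ∈ S} R(w(p·τ(P) - P))` where `R(r) = ⌈r⌉ - r`. -/
def h2Tau (p a1 b1 a2 b2 : ℤ) {n : ℕ} (f : Fin n → ℤ × ℤ)
    (τ : Equiv.Perm (Fin n)) : ℚ :=
  ∑ i, ((⌈wt a1 b1 a2 b2 (p • f (τ i) - f i)⌉ : ℚ)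
        - wt a1 b1 a2 b2 (p • f (τ i) - f i))

/-- A canonical indexing of a multiset. -/
def listFn (S : Multiset (ℤ × ℤ)) : Fin S.toList.length → ℤ × ℤ := S.toList.get

/-- `h(S)`: the minimum of `h(S,τ)` over all permutations `τ` of `S`. -/
def hMin (p a1 b1 a2 b2 : ℤ) (S : Multiset (ℤ × ℤ)) : ℤ :=
  Finset.univ.inf' (Finset.univ_nonempty_iff.mpr ⟨1⟩)
    fun τ : Equiv.Perm (Fin S.toList.length) => hTau p a1 b1 a2 b2 (listFn S) τ

/-- `h2(S)`: the minimum of `h2(S,τ)` over all permutations `τ` of `S`. -/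
def h2Min (p a1 b1 a2 b2 : ℤ) (S : Multiset (ℤ × ℤ)) : ℚ :=
  Finset.univ.inf' (Finset.univ_nonempty_iff.mpr ⟨1⟩)
    fun τ : Equiv.Perm (Fin S.toList.length) => h2Tau p a1 b1 a2 b2 (listFn S) τ

/-!
Since `⌈x⌉ - x = fract (-x)`, we have `h2(S, τ) = Σ fract (w(P) - p·w(τ P))`, so `h2(S)` is the
least cost of a perfect matching between the multisets `w(S)` and `p·w(S)` when matching `x`
with `y` costs `fract (x - y)`. As `fract (x + y) ≤ fract x + fract y`, a point on which both
sides agree can be matched with itself at no loss; hence adjoining a multiset `T` with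
`fract (p·w(T)) = fract (w(T))` does not change the minimum. Each translate `□^Int + Qᵢ` is such
a multiset: `□^Int` is a set of representatives of `ℤ²/Λ`, multiplication by `p` permutes `ℤ²/Λ`
because `p` is prime to `D = [ℤ² : Λ]`, and `w` takes integer values on `Λ` and at `Qᵢ`.
-/

theorem Equiv.optionCongr_removeNone {α : Type*} [DecidableEq α] {τ : Equiv.Perm (Option α)}
    (h : τ none = none) : τ.removeNone.optionCongr = τ := by
  ext1 (_ | x)
  · simp [h]
  · refine Equiv.removeNone_some τ ?_
    rcases hx : τ (some x) with _ | y
    · exact absurd (τ.injective (hx.trans h.symm)) (by simp)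
    · exact ⟨y, rfl⟩

theorem Fintype.exists_equiv_of_map_univ_eq {ι κ α : Type*} [Fintype ι] [Fintype κ]
    {f : ι → α} {g : κ → α} (h : univ.val.map f = univ.val.map g) :
    ∃ e : ι ≃ κ, ∀ i, g (e i) = f i := by
  classical
  have hcard (c : α) : Fintype.card {i // f i = c} = Fintype.card {j // g j = c} := by
    simpa [Fintype.card_subtype, Multiset.count_map, eq_comm, Finset.card_def] using
      congrArg (Multiset.count c) h
  exact ⟨Equiv.ofFiberEquiv fun c => Fintype.equivOfCardEq (hcard c), Equiv.ofFiberEquiv_map _⟩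

theorem Fintype.univ_val_map_sumElim {ι κ α : Type*} [Fintype ι] [Fintype κ] (f : ι → α)
    (g : κ → α) : univ.val.map (Sum.elim f g) = univ.val.map f + univ.val.map g :=
  Multiset.map_disjSum (s := univ.val) (t := univ.val) _

section Matching

variable {R : Type*} [CommRing R] [LinearOrder R] [FloorRing R]
  {ι κ : Type*} [Fintype ι] [DecidableEq ι] [Fintype κ] [DecidableEq κ]

def matchingCost (a b : ι → R) : R :=
  univ.inf' univ_nonempty fun τ : Equiv.Perm ι => ∑ i, Int.fract (a i - b (τ i))

theorem matchingCost_le (a b : ι → R) (τ : Equiv.Perm ι) :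
    matchingCost a b ≤ ∑ i, Int.fract (a i - b (τ i)) :=
  inf'_le _ (mem_univ τ)

theorem le_matchingCost {a b : ι → R} {c : R}
    (h : ∀ τ : Equiv.Perm ι, c ≤ ∑ i, Int.fract (a i - b (τ i))) :
    c ≤ matchingCost a b :=
  le_inf' _ _ fun τ _ => h τ

theorem matchingCost_le_comp_equiv (a b : κ → R) (e₁ e₂ : ι ≃ κ) :
    matchingCost a b ≤ matchingCost (a ∘ e₁) (b ∘ e₂) :=
  le_matchingCost fun τ => (matchingCost_le a b (e₁.symm.trans (τ.trans e₂))).trans_eq <|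
    Fintype.sum_equiv e₁.symm _ _ fun k => by simp

theorem matchingCost_comp_equiv (a b : κ → R) (e₁ e₂ : ι ≃ κ) :
    matchingCost (a ∘ e₁) (b ∘ e₂) = matchingCost a b := by
  refine le_antisymm ?_ (matchingCost_le_comp_equiv a b e₁ e₂)
  simpa [Function.comp_def] using
    matchingCost_le_comp_equiv (a ∘ e₁) (b ∘ e₂) e₁.symm e₂.symm

theorem matchingCost_congr_fract [IsStrictOrderedRing R] {a a' b b' : ι → R}
    (ha : ∀ i, Int.fract (a i) = Int.fract (a' i))
    (hb : ∀ i, Int.fract (b i) = Int.fract (b' i)) :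
    matchingCost a b = matchingCost a' b' := by
  unfold matchingCost
  congr 1
  funext τ
  refine sum_congr rfl fun i _ => ?_
  obtain ⟨m, hm⟩ := Int.fract_eq_fract.mp (ha i)
  obtain ⟨n, hn⟩ := Int.fract_eq_fract.mp (hb (τ i))
  exact Int.fract_eq_fract.mpr ⟨m - n, by push_cast; linarith⟩

/-- Swapping so that `none` is matched with itself does not increase the cost,
by `Int.fract_add_le`. -/
theorem exists_perm_fixing_none_sum_fract_le [IsStrictOrderedRing R] {a b : Option ι → R}
    (h : a none = b none) (τ : Equiv.Perm (Option ι)) :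
    ∃ τ' : Equiv.Perm (Option ι), τ' none = none ∧
      ∑ i, Int.fract (a i - b (τ' i)) ≤ ∑ i, Int.fract (a i - b (τ i)) := by
  set j := τ.symm none
  by_cases hjn : j = none
  · exact ⟨τ, (τ.symm_apply_eq.mp hjn).symm, le_rfl⟩
  refine ⟨(Equiv.swap none j).trans τ, by simp [j], ?_⟩
  set c : Option ι → Option ι → R := fun i k => Int.fract (a i - b k)
  have hswap : ∑ i, c i (τ (Equiv.swap none j i)) = ∑ i, c (Equiv.swap none j i) (τ i) :=
    Fintype.sum_equiv (Equiv.swap none j) _ _ fun i => by simp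
  have hdiff : ∑ i, c i (τ i) - ∑ i, c (Equiv.swap none j i) (τ i) =
      (c none (τ none) - c j (τ none)) + (c j none - c none none) := by
    rw [← sum_sub_distrib, Fintype.sum_eq_add none j (Ne.symm hjn)]
    · simp [j]
    · rintro i ⟨h1, h2⟩
      simp [Equiv.swap_apply_of_ne_of_ne h1 h2]
  have htri : c j (τ none) ≤ c j none + c none (τ none) := by
    simpa [c, h] using Int.fract_add_le (a j - b none) (b none - b (τ none))
  have h0 : c none none = 0 := by simp [c, h]
  simp only [Equiv.trans_apply]
  change ∑ i, c i (τ (Equiv.swap none j i)) ≤ ∑ i, c i (τ i)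
  rw [hswap]
  linarith

theorem matchingCost_option [IsStrictOrderedRing R] {a b : Option ι → R} (h : a none = b none) :
    matchingCost a b = matchingCost (a ∘ some) (b ∘ some) := by
  have cost_optionCongr (σ : Equiv.Perm ι) : ∑ i, Int.fract (a i - b (σ.optionCongr i)) =
      ∑ x, Int.fract ((a ∘ some) x - (b ∘ some) (σ x)) := by
    simp [Fintype.sum_option, h]
  refine le_antisymm (le_matchingCost fun σ => ?_) (le_matchingCost fun τ => ?_)
  · exact (matchingCost_le a b σ.optionCongr).trans_eq (cost_optionCongr σ)
  · obtain ⟨τ', hτ'none, hτ'⟩ := exists_perm_fixing_none_sum_fract_le h τ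
    calc matchingCost (a ∘ some) (b ∘ some) ≤ _ := matchingCost_le _ _ τ'.removeNone
      _ = ∑ i, Int.fract (a i - b (τ' i)) := by
        conv_rhs => rw [← Equiv.optionCongr_removeNone hτ'none]
        exact (cost_optionCongr _).symm
      _ ≤ _ := hτ'

theorem matchingCost_sumElim [IsStrictOrderedRing R] (a b : ι → R) (c : κ → R) :
    matchingCost (Sum.elim a c) (Sum.elim b c) = matchingCost a b := by
  revert c
  refine Fintype.induction_empty_option (P := fun κ _ => ∀ [DecidableEq κ] (c : κ → R),
    matchingCost (Sum.elim a c) (Sum.elim b c) = matchingCost a b) ?_ ?_ ?_ κ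
  · intro α β _ e ih _ c
    let := Fintype.ofEquiv β e.symm
    classical
    rw [← ih (c ∘ e), ← matchingCost_comp_equiv _ _ ((Equiv.refl ι).sumCongr e)
      ((Equiv.refl ι).sumCongr e)]
    congr 1 <;> ext (i | x) <;> rfl
  · intro _ c
    rw [← matchingCost_comp_equiv _ _ (Equiv.sumEmpty ι PEmpty).symm
      (Equiv.sumEmpty ι PEmpty).symm]
    rfl
  · intro α _ ih _ c
    classical
    let e : Option (ι ⊕ α) ≃ ι ⊕ Option α := (Equiv.optionEquivSumPUnit _).trans
      ((Equiv.sumAssoc ι α PUnit.{1}).trans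
        ((Equiv.refl ι).sumCongr (Equiv.optionEquivSumPUnit α).symm))
    rw [← matchingCost_comp_equiv _ _ e e,
      matchingCost_option (a := Sum.elim a c ∘ e) (b := Sum.elim b c ∘ e) rfl,
      ← ih (c ∘ some)]
    congr 1 <;> ext (i | x) <;> rfl

theorem matchingCost_sumElim_of_map_fract_eq [IsStrictOrderedRing R] (a b : ι → R)
    {c d : κ → R}
    (h : univ.val.map (Int.fract ∘ c) = univ.val.map (Int.fract ∘ d)) :
    matchingCost (Sum.elim a c) (Sum.elim b d) = matchingCost a b := by
  obtain ⟨σ, hσ⟩ := Fintype.exists_equiv_of_map_univ_eq h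
  rw [← matchingCost_comp_equiv _ _ (Equiv.refl _) ((Equiv.refl ι).sumCongr σ),
    matchingCost_congr_fract (a' := Sum.elim a c) (b' := Sum.elim b c)
      (by rintro (i | j) <;> rfl) (by rintro (i | j); exacts [rfl, hσ j])]
  exact matchingCost_sumElim a b c

end Matching

section Lattice

variable {a1 b1 a2 b2 : ℤ}

/-- `D` times the coordinates of `P` in the basis `P1, P2`. -/
def latticeCoords (a1 b1 a2 b2 : ℤ) (P : ℤ × ℤ) : ℤ × ℤ :=
  (a2 * P.2 - b2 * P.1, b1 * P.1 - a1 * P.2)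

theorem latticeCoords_sub (P R : ℤ × ℤ) :
    latticeCoords a1 b1 a2 b2 (P - R) =
      latticeCoords a1 b1 a2 b2 P - latticeCoords a1 b1 a2 b2 R := by
  ext <;> simp [latticeCoords] <;> ring

theorem latticeCoords_smul (p : ℤ) (P : ℤ × ℤ) :
    latticeCoords a1 b1 a2 b2 (p • P) = p • latticeCoords a1 b1 a2 b2 P := by
  ext <;> simp [latticeCoords] <;> ring

theorem latticeCoords_basis (m n : ℤ) :
    latticeCoords a1 b1 a2 b2 (m * a1 + n * a2, m * b1 + n * b2) =
      (m * (a2 * b1 - a1 * b2), n * (a2 * b1 - a1 * b2)) := by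
  ext <;> simp [latticeCoords] <;> ring

theorem smul_eq_latticeCoords (P : ℤ × ℤ) :
    (a2 * b1 - a1 * b2) • P =
      ((latticeCoords a1 b1 a2 b2 P).1 * a1 + (latticeCoords a1 b1 a2 b2 P).2 * a2,
        (latticeCoords a1 b1 a2 b2 P).1 * b1 + (latticeCoords a1 b1 a2 b2 P).2 * b2) := by
  ext <;> simp [latticeCoords] <;> ring

theorem mem_Lambda_iff (hD : a2 * b1 - a1 * b2 ≠ 0) {P : ℤ × ℤ} :
    P ∈ Lambda a1 b1 a2 b2 ↔ (a2 * b1 - a1 * b2) ∣ (latticeCoords a1 b1 a2 b2 P).1 ∧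
      (a2 * b1 - a1 * b2) ∣ (latticeCoords a1 b1 a2 b2 P).2 := by
  constructor
  · rintro ⟨m, n, rfl⟩
    rw [latticeCoords_basis]
    exact ⟨dvd_mul_left _ _, dvd_mul_left _ _⟩
  · rintro ⟨⟨m, hm⟩, ⟨n, hn⟩⟩
    refine ⟨m, n, smul_right_injective _ hD ?_⟩
    dsimp only
    rw [smul_eq_latticeCoords, hm, hn]
    ext <;> simp <;> ring

theorem sub_mem_Lambda {u v : ℤ × ℤ} (hu : u ∈ Lambda a1 b1 a2 b2)
    (hv : v ∈ Lambda a1 b1 a2 b2) :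
    u - v ∈ Lambda a1 b1 a2 b2 := by
  obtain ⟨m, n, rfl⟩ := hu
  obtain ⟨m', n', rfl⟩ := hv
  exact ⟨m - m', n - n', by ext <;> simp <;> ring⟩

theorem mem_Lambda_of_smul_mem (hD : a2 * b1 - a1 * b2 ≠ 0) {p : ℤ}
    (hp : IsCoprime p (a2 * b1 - a1 * b2)) {u : ℤ × ℤ} (h : p • u ∈ Lambda a1 b1 a2 b2) :
    u ∈ Lambda a1 b1 a2 b2 := by
  rw [mem_Lambda_iff hD, latticeCoords_smul] at h
  rw [mem_Lambda_iff hD]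
  exact ⟨hp.symm.dvd_of_dvd_mul_left h.1, hp.symm.dvd_of_dvd_mul_left h.2⟩

theorem mem_squareInt_iff (hD : 0 < a2 * b1 - a1 * b2) {P : ℤ × ℤ} :
    P ∈ squareInt a1 b1 a2 b2 ↔
      (latticeCoords a1 b1 a2 b2 P).1 ∈ Set.Ico 0 (a2 * b1 - a1 * b2) ∧
        (latticeCoords a1 b1 a2 b2 P).2 ∈ Set.Ico 0 (a2 * b1 - a1 * b2) := by
  have hP := smul_eq_latticeCoords (a1 := a1) (b1 := b1) (a2 := a2) (b2 := b2) P
  set D := a2 * b1 - a1 * b2 with hDdef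
  set c := latticeCoords a1 b1 a2 b2 P with hc
  have hDq : (0 : ℚ) < D := by exact_mod_cast hD
  constructor
  · rintro ⟨s, t, hs0, hs1, ht0, ht1, hx, hy⟩
    have hs : (c.1 : ℚ) = s * D := by
      simp only [hc, hDdef, latticeCoords]; push_cast; rw [hx, hy]; ring
    have ht : (c.2 : ℚ) = t * D := by
      simp only [hc, hDdef, latticeCoords]; push_cast; rw [hx, hy]; ring
    refine ⟨⟨?_, ?_⟩, ?_, ?_⟩
    · exact_mod_cast (show (0 : ℚ) ≤ c.1 by rw [hs]; positivity)
    · exact_mod_cast (show (c.1 : ℚ) < D by rw [hs]; nlinarith)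
    · exact_mod_cast (show (0 : ℚ) ≤ c.2 by rw [ht]; positivity)
    · exact_mod_cast (show (c.2 : ℚ) < D by rw [ht]; nlinarith)
  · rintro ⟨⟨hs0, hs1⟩, ht0, ht1⟩
    have hx : (D : ℚ) * P.1 = c.1 * a1 + c.2 * a2 := by exact_mod_cast congrArg Prod.fst hP
    have hy : (D : ℚ) * P.2 = c.1 * b1 + c.2 * b2 := by exact_mod_cast congrArg Prod.snd hP
    refine ⟨c.1 / D, c.2 / D, by positivity, ?_, by positivity, ?_, ?_, ?_⟩
    · rw [div_lt_one hDq]; exact_mod_cast hs1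
    · rw [div_lt_one hDq]; exact_mod_cast ht1
    · field_simp; linarith
    · field_simp; linarith

theorem exists_squareInt_sub_mem_Lambda (hD : 0 < a2 * b1 - a1 * b2) (P : ℤ × ℤ) :
    ∃ v ∈ squareInt a1 b1 a2 b2, P - v ∈ Lambda a1 b1 a2 b2 := by
  have hmod (x : ℤ) : x - x / (a2 * b1 - a1 * b2) * (a2 * b1 - a1 * b2) =
      x % (a2 * b1 - a1 * b2) := by
    rw [Int.emod_def]; ring
  set c := latticeCoords a1 b1 a2 b2 P with hc
  refine ⟨P - (c.1 / (a2 * b1 - a1 * b2) * a1 + c.2 / (a2 * b1 - a1 * b2) * a2,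
      c.1 / (a2 * b1 - a1 * b2) * b1 + c.2 / (a2 * b1 - a1 * b2) * b2),
    ?_, _, _, sub_sub_cancel _ _⟩
  rw [mem_squareInt_iff hD, latticeCoords_sub, latticeCoords_basis, ← hc]
  simp only [Prod.fst_sub, Prod.snd_sub, hmod]
  exact ⟨⟨Int.emod_nonneg _ hD.ne', Int.emod_lt_of_pos _ hD⟩,
    Int.emod_nonneg _ hD.ne', Int.emod_lt_of_pos _ hD⟩

theorem eq_of_sub_mem_Lambda (hD : 0 < a2 * b1 - a1 * b2) {v v' : ℤ × ℤ}
    (hv : v ∈ squareInt a1 b1 a2 b2) (hv' : v' ∈ squareInt a1 b1 a2 b2)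
    (h : v - v' ∈ Lambda a1 b1 a2 b2) : v = v' := by
  rw [mem_squareInt_iff hD] at hv hv'
  rw [mem_Lambda_iff hD.ne', latticeCoords_sub] at h
  simp only [Set.mem_Ico] at hv hv'
  have hc : latticeCoords a1 b1 a2 b2 v = latticeCoords a1 b1 a2 b2 v' := by
    ext
    · refine sub_eq_zero.mp (Int.eq_zero_of_abs_lt_dvd h.1 ?_)
      exact abs_sub_lt_iff.mpr ⟨by omega, by omega⟩
    · refine sub_eq_zero.mp (Int.eq_zero_of_abs_lt_dvd h.2 ?_)
      exact abs_sub_lt_iff.mpr ⟨by omega, by omega⟩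
  refine smul_right_injective _ hD.ne' ?_
  dsimp only
  rw [smul_eq_latticeCoords, smul_eq_latticeCoords, hc]

theorem wt_add (P R : ℤ × ℤ) :
    wt a1 b1 a2 b2 (P + R) = wt a1 b1 a2 b2 P + wt a1 b1 a2 b2 R := by
  simp only [wt, ← add_div, Prod.fst_add, Prod.snd_add]
  push_cast
  ring

theorem wt_sub (P R : ℤ × ℤ) :
    wt a1 b1 a2 b2 (P - R) = wt a1 b1 a2 b2 P - wt a1 b1 a2 b2 R := by
  simp only [wt, ← sub_div, Prod.fst_sub, Prod.snd_sub]
  push_cast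
  ring

theorem wt_smul (p : ℤ) (P : ℤ × ℤ) : wt a1 b1 a2 b2 (p • P) = p * wt a1 b1 a2 b2 P := by
  simp only [wt, ← mul_div_assoc, Prod.smul_fst, Prod.smul_snd, smul_eq_mul]
  push_cast
  ring

theorem exists_wt_eq_intCast_of_mem_Lambda (hD : a2 * b1 - a1 * b2 ≠ 0) {u : ℤ × ℤ}
    (hu : u ∈ Lambda a1 b1 a2 b2) : ∃ z : ℤ, wt a1 b1 a2 b2 u = z := by
  obtain ⟨m, n, rfl⟩ := hu
  refine ⟨m + n, ?_⟩
  rw [wt, div_eq_iff (by exact_mod_cast hD)]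
  push_cast
  ring

theorem exists_perm_smul_sub_mem_Lambda (hD : 0 < a2 * b1 - a1 * b2) {p : ℤ}
    (hp : IsCoprime p (a2 * b1 - a1 * b2)) {B : Finset (ℤ × ℤ)}
    (hB : (B : Set (ℤ × ℤ)) = squareInt a1 b1 a2 b2) :
    ∃ ρ : Equiv.Perm B, ∀ v : B, p • (v : ℤ × ℤ) - ρ v ∈ Lambda a1 b1 a2 b2 := by
  have hmem {x : ℤ × ℤ} : x ∈ B ↔ x ∈ squareInt a1 b1 a2 b2 := by rw [← hB, mem_coe]
  choose r hr hrL using exists_squareInt_sub_mem_Lambda hD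
  let ψ : B → B := fun v => ⟨r (p • (v : ℤ × ℤ)), hmem.mpr (hr _)⟩
  have hψ : Function.Injective ψ := by
    intro v v' h
    have hr_eq : r (p • (v : ℤ × ℤ)) = r (p • (v' : ℤ × ℤ)) := congrArg Subtype.val h
    have hsub : p • ((v : ℤ × ℤ) - v') ∈ Lambda a1 b1 a2 b2 := by
      rw [smul_sub, ← sub_sub_sub_cancel_right _ _ (r (p • (v' : ℤ × ℤ)))]
      exact sub_mem_Lambda (hr_eq ▸ hrL _) (hrL _)
    exact Subtype.ext (eq_of_sub_mem_Lambda hD (hmem.mp v.2) (hmem.mp v'.2)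
      (mem_Lambda_of_smul_mem hD.ne' hp hsub))
  exact ⟨Equiv.ofBijective ψ (Finite.injective_iff_bijective.mp hψ), fun v => hrL _⟩

theorem map_fract_smul_wt_eq (hD : 0 < a2 * b1 - a1 * b2) {p : ℤ}
    (hp : IsCoprime p (a2 * b1 - a1 * b2)) {B : Finset (ℤ × ℤ)}
    (hB : (B : Set (ℤ × ℤ)) = squareInt a1 b1 a2 b2) :
    B.val.map (fun v => Int.fract (p * wt a1 b1 a2 b2 v)) =
      B.val.map (fun v => Int.fract (wt a1 b1 a2 b2 v)) := by
  obtain ⟨ρ, hρ⟩ := exists_perm_smul_sub_mem_Lambda hD hp hB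
  have hfract (v : B) : Int.fract (p * wt a1 b1 a2 b2 v) = Int.fract (wt a1 b1 a2 b2 (ρ v)) := by
    obtain ⟨z, hz⟩ := exists_wt_eq_intCast_of_mem_Lambda hD.ne' (hρ v)
    rw [wt_sub, wt_smul] at hz
    exact Int.fract_eq_fract.mpr ⟨z, hz⟩
  have hB_univ (f : ℤ × ℤ → ℚ) : B.val.map f = univ.val.map fun v : B => f v := by
    rw [univ_eq_attach, attach_val]
    exact (Multiset.attach_map_val' _ _).symm
  rw [hB_univ, hB_univ, funext hfract]
  exact (Multiset.map_map (fun v : B => Int.fract (wt a1 b1 a2 b2 v)) ρ _).symm.trans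
    (congrArg _ (Multiset.map_univ_val_equiv ρ))

end Lattice

section Weights

variable {p a1 b1 a2 b2 : ℤ}

theorem h2Tau_eq_sum_fract {n : ℕ} (f : Fin n → ℤ × ℤ) (τ : Equiv.Perm (Fin n)) :
    h2Tau p a1 b1 a2 b2 f τ =
      ∑ i, Int.fract (wt a1 b1 a2 b2 (f i) - p * wt a1 b1 a2 b2 (f (τ i))) := by
  have ceil_sub_self (x : ℚ) : (⌈x⌉ : ℚ) - x = Int.fract (-x) := by
    rw [← Int.self_sub_floor, Int.floor_neg]
    push_cast
    ring
  exact sum_congr rfl fun i _ => by rw [wt_sub, wt_smul, ceil_sub_self, neg_sub]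

theorem univ_val_map_listFn (S : Multiset (ℤ × ℤ)) : univ.val.map (listFn S) = S := by
  rw [listFn, Fin.univ_val_map, List.ofFn_get, Multiset.coe_toList]

theorem h2Min_eq_matchingCost {ι : Type*} [Fintype ι] [DecidableEq ι] {S : Multiset (ℤ × ℤ)}
    (f : ι → ℤ × ℤ) (hf : univ.val.map f = S) :
    h2Min p a1 b1 a2 b2 S =
      matchingCost (wt a1 b1 a2 b2 ∘ f) ((fun P => p * wt a1 b1 a2 b2 P) ∘ f) := by
  obtain ⟨e, he⟩ := Fintype.exists_equiv_of_map_univ_eq ((univ_val_map_listFn S).trans hf.symm)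
  rw [← matchingCost_comp_equiv _ _ e e]
  simp only [h2Min, matchingCost, h2Tau_eq_sum_fract, Function.comp_def, he]

theorem h2Min_add_of_map_fract_eq {S T : Multiset (ℤ × ℤ)}
    (hT : T.map (fun P => Int.fract (p * wt a1 b1 a2 b2 P)) =
      T.map (fun P => Int.fract (wt a1 b1 a2 b2 P))) :
    h2Min p a1 b1 a2 b2 (S + T) = h2Min p a1 b1 a2 b2 S := by
  rw [h2Min_eq_matchingCost (Sum.elim (listFn S) (listFn T))
      (by rw [Fintype.univ_val_map_sumElim, univ_val_map_listFn, univ_val_map_listFn]),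
    h2Min_eq_matchingCost (listFn S) (univ_val_map_listFn S), Sum.comp_elim, Sum.comp_elim]
  refine matchingCost_sumElim_of_map_fract_eq _ _ ?_
  rw [← univ_val_map_listFn T, Multiset.map_map, Multiset.map_map] at hT
  exact hT.symm

theorem map_fract_wt_translate_eq {Q : ℤ × ℤ} (hQ : ∃ z : ℤ, wt a1 b1 a2 b2 Q = z)
    {M : Multiset (ℤ × ℤ)}
    (hM : M.map (fun P => Int.fract (p * wt a1 b1 a2 b2 P)) =
      M.map (fun P => Int.fract (wt a1 b1 a2 b2 P))) :
    (M.map (· + Q)).map (fun P => Int.fract (p * wt a1 b1 a2 b2 P)) =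
      (M.map (· + Q)).map (fun P => Int.fract (wt a1 b1 a2 b2 P)) := by
  obtain ⟨z, hz⟩ := hQ
  have hpz : (p : ℚ) * z = (p * z : ℤ) := by push_cast; ring
  simpa only [Multiset.map_map, Function.comp_def, wt_add, hz, mul_add, hpz,
    Int.fract_add_intCast] using hM

end Weights

theorem statement3_general (p a1 b1 a2 b2 : ℤ)
    (hD : 0 < a2 * b1 - a1 * b2)
    (hp : Prime p) (hpD : ¬ p ∣ (a2 * b1 - a1 * b2))
    (B : Finset (ℤ × ℤ)) (hB : (B : Set (ℤ × ℤ)) = squareInt a1 b1 a2 b2)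
    (S2 : Finset (ℤ × ℤ))
    (k : ℕ) (Q : Fin k → ℤ × ℤ)
    (hQw : ∀ i, ∃ z : ℤ, wt a1 b1 a2 b2 (Q i) = z) :
    h2Min p a1 b1 a2 b2 (S2.val + ∑ i : Fin k, B.val.map (fun P => P + Q i)) =
      h2Min p a1 b1 a2 b2 S2.val := by
  have hB_fract := map_fract_smul_wt_eq hD ((hp.coprime_iff_not_dvd).mpr hpD) hB
  refine h2Min_add_of_map_fract_eq ?_
  simp only [← Multiset.coe_mapAddMonoidHom, map_sum]
  exact sum_congr rfl fun i _ => map_fract_wt_translate_eq (hQw i) hB_fract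

/-- For a prime `p ∤ D`, a finite subset `S2` of `M(Δ)` and points
`Q1, ..., Qk` of `M(Δ)` with integer weights, the multiset
`S1 = S2 ⊎ (□^Int + Q1) ⊎ ... ⊎ (□^Int + Qk)` satisfies `h2(S1) = h2(S2)`. -/
theorem statement3 (p a1 b1 a2 b2 : ℤ)
    (ha1 : 0 ≤ a1) (hb1 : 0 ≤ b1) (ha2 : 0 ≤ a2) (hb2 : 0 ≤ b2)
    (hD : 0 < a2 * b1 - a1 * b2)
    (hp : Prime p) (hpD : ¬ p ∣ (a2 * b1 - a1 * b2))
    (B : Finset (ℤ × ℤ)) (hB : (B : Set (ℤ × ℤ)) = squareInt a1 b1 a2 b2)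
    (S2 : Finset (ℤ × ℤ)) (hS2 : (S2 : Set (ℤ × ℤ)) ⊆ MDelta a1 b1 a2 b2)
    (k : ℕ) (Q : Fin k → ℤ × ℤ)
    (hQmem : ∀ i, Q i ∈ MDelta a1 b1 a2 b2)
    (hQw : ∀ i, ∃ z : ℤ, wt a1 b1 a2 b2 (Q i) = z) :
    h2Min p a1 b1 a2 b2 (S2.val + ∑ i : Fin k, B.val.map (fun P => P + Q i)) =
      h2Min p a1 b1 a2 b2 S2.val :=
  statement3_general p a1 b1 a2 b2 hD hp hpD B hB S2 k Q hQw
end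
end

section
/- For every integer k ≥ 1, the number of lattice points of M(Δ) of weight strictly less than k satisfies x_k = k*x_1 + D*k*(k−1)/2. -/
open Finset

noncomputable section

/-!
In the coordinates `u = a2 * y - b2 * x`, `v = b1 * x - a1 * y`, for which
`D • P = u • P1 + v • P2`, the cone `M(Δ)` is `u, v ≥ 0` and the weight is `(u + v) / D`, so
`T_k` is the part of the cone where `u + v < k * D`. The layer `(k + 1) * D ≤ u + v < (k + 2) * D`
is the layer below it shifted by `P1`, together with its points with `u < D`; these form a
fundamental domain of the lattice `ℤ P1 + ℤ P2`, whose index in `ℤ²` is `D`. So each layer has `D`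
more points than the one below, and summing the layers gives `x_k = k * x_1 + D * k * (k - 1) / 2`.
-/

open Pointwise

namespace LatticeCone

section Counting

variable {M : Type*} [AddCommGroup M] (c : M →+ ℤ × ℤ)

def slab (m n : ℤ) : Set M :=
  {P | 0 ≤ (c P).1 ∧ 0 ≤ (c P).2 ∧ m ≤ (c P).1 + (c P).2 ∧ (c P).1 + (c P).2 < n}

def fundParallelogram (D t : ℤ) : Set M :=
  {P | 0 ≤ (c P).1 ∧ (c P).1 < D ∧ t ≤ (c P).1 + (c P).2 ∧ (c P).1 + (c P).2 < t + D}

variable {c}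

theorem slab_finite (hc : Function.Injective c) (m n : ℤ) : (slab c m n).Finite := by
  refine ((Set.finite_Icc (0, 0) (n, n)).preimage hc.injOn).subset ?_
  rintro P ⟨hu, hv, -, hn⟩
  exact ⟨⟨hu, hv⟩, by omega, by omega⟩

theorem slab_union_slab {m n p : ℤ} (hmn : m ≤ n) (hnp : n ≤ p) :
    slab c m n ∪ slab c n p = slab c m p := by
  ext P
  simp only [slab, Set.mem_union, Set.mem_ofPred_eq]
  omega

theorem disjoint_slab_slab (m n p : ℤ) : Disjoint (slab c m n) (slab c n p) :=
  Set.disjoint_left.mpr fun _ hP hP' => by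
    simp only [slab, Set.mem_ofPred_eq] at hP hP'
    omega

variable {P1 P2 : M} {D : ℤ}

theorem map_zsmul_add_zsmul (h1 : c P1 = (D, 0)) (h2 : c P2 = (0, D)) (m n : ℤ) :
    c (m • P1 + n • P2) = (m * D, n * D) := by
  simp [h1, h2]

theorem linearIndependent_pair (hD : D ≠ 0) (h1 : c P1 = (D, 0)) (h2 : c P2 = (0, D)) :
    LinearIndependent ℤ ![P1, P2] := by
  refine LinearIndependent.pair_iff.mpr fun m n h => ?_
  have := map_zsmul_add_zsmul h1 h2 m n
  simp only [h, map_zero, Prod.ext_iff, Prod.fst_zero, Prod.snd_zero] at this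
  exact ⟨by simpa [hD] using this.1.symm, by simpa [hD] using this.2.symm⟩

theorem mem_span_pair_iff {x : M} :
    x ∈ Submodule.span ℤ (Set.range ![P1, P2]) ↔ ∃ m n : ℤ, m • P1 + n • P2 = x := by
  rw [Matrix.range_cons_cons_empty, Submodule.mem_span_pair]

theorem fundParallelogram_eq_of_sub_mem_span (hD : 0 < D) (h1 : c P1 = (D, 0))
    (h2 : c P2 = (0, D)) {t : ℤ} {x y : M} (hx : x ∈ fundParallelogram c D t)
    (hy : y ∈ fundParallelogram c D t)
    (hxy : x - y ∈ Submodule.span ℤ (Set.range ![P1, P2])) : x = y := by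
  obtain ⟨m, n, hmn⟩ := mem_span_pair_iff.mp hxy
  have hc := map_zsmul_add_zsmul h1 h2 m n
  rw [hmn, map_sub, Prod.ext_iff] at hc
  simp only [fundParallelogram, Set.mem_ofPred_eq, Prod.fst_sub, Prod.snd_sub] at hx hy hc
  have hm : m * D = 0 :=
    Int.eq_zero_of_abs_lt_dvd (dvd_mul_left D m) (abs_lt.mpr ⟨by linarith, by linarith⟩)
  have hn : n * D = 0 :=
    Int.eq_zero_of_abs_lt_dvd (dvd_mul_left D n) (abs_lt.mpr ⟨by linarith, by linarith⟩)
  rw [← sub_eq_zero, ← hmn, (mul_eq_zero.mp hm).resolve_right hD.ne',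
    (mul_eq_zero.mp hn).resolve_right hD.ne', zero_smul, zero_smul, add_zero]

theorem exists_mem_fundParallelogram_sub_mem_span (hD : 0 < D) (h1 : c P1 = (D, 0))
    (h2 : c P2 = (0, D)) (t : ℤ) (g : M) :
    ∃ s ∈ fundParallelogram c D t, g - s ∈ Submodule.span ℤ (Set.range ![P1, P2]) := by
  set u := (c g).1
  set w := u % D + (c g).2 - t
  refine ⟨g - (u / D) • P1 - (w / D) • P2, ?_, mem_span_pair_iff.mpr ⟨u / D, w / D, by abel⟩⟩
  have hu := Int.emod_def u D
  have hw := Int.emod_def w D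
  have hu0 := Int.emod_nonneg u hD.ne'
  have huD := Int.emod_lt_of_pos u hD
  have hw0 := Int.emod_nonneg w hD.ne'
  have hwD := Int.emod_lt_of_pos w hD
  simp only [fundParallelogram, Set.mem_ofPred_eq, map_sub, map_zsmul, h1, h2, Prod.fst_sub,
    Prod.snd_sub, Prod.smul_mk, smul_eq_mul]
  refine ⟨?_, ?_, ?_, ?_⟩ <;> linarith

theorem isComplement_fundParallelogram (hD : 0 < D) (h1 : c P1 = (D, 0)) (h2 : c P2 = (0, D))
    (t : ℤ) :
    AddSubgroup.IsComplement (fundParallelogram c D t)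
      (Submodule.span ℤ (Set.range ![P1, P2])).toAddSubgroup := by
  refine AddSubgroup.isComplement_iff_existsUnique_neg_add_mem.mpr fun g => ?_
  obtain ⟨s, hs, hgs⟩ := exists_mem_fundParallelogram_sub_mem_span hD h1 h2 t g
  refine ⟨⟨s, hs⟩, by simpa [neg_add_eq_sub] using hgs, fun y hy => Subtype.ext ?_⟩
  refine fundParallelogram_eq_of_sub_mem_span hD h1 h2 y.2 hs ?_
  have := sub_mem hgs (show g - y ∈ _ by simpa [neg_add_eq_sub] using hy)
  rwa [sub_sub_sub_cancel_left] at this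

theorem slab_add_eq_vadd_union (hD : 0 ≤ D) (h1 : c P1 = (D, 0)) {t : ℤ} (ht : 0 ≤ t) :
    slab c (t + D) (t + D + D) = (P1 +ᵥ slab c t (t + D)) ∪ fundParallelogram c D (t + D) := by
  ext P
  simp only [slab, fundParallelogram, Set.mem_union, Set.mem_vadd_set_iff_neg_vadd_mem,
    vadd_eq_add, Set.mem_ofPred_eq, map_add, map_neg, h1, Prod.fst_add, Prod.snd_add,
    Prod.fst_neg, Prod.snd_neg]
  omega

theorem disjoint_vadd_slab_fundParallelogram (h1 : c P1 = (D, 0)) (t : ℤ) :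
    Disjoint (P1 +ᵥ slab c t (t + D)) (fundParallelogram c D (t + D)) :=
  Set.disjoint_left.mpr fun P hP hP' => by
    simp only [slab, fundParallelogram, Set.mem_vadd_set_iff_neg_vadd_mem, vadd_eq_add,
      Set.mem_ofPred_eq, map_add, map_neg, h1, Prod.fst_add, Prod.fst_neg] at hP hP'
    omega

theorem ncard_fundParallelogram (hD : 0 < D) (h1 : c P1 = (D, 0)) (h2 : c P2 = (0, D))
    (hindex : ((Submodule.span ℤ (Set.range ![P1, P2])).toAddSubgroup.index : ℤ) = D) (t : ℤ) :
    ((fundParallelogram c D t).ncard : ℤ) = D := by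
  rw [(isComplement_fundParallelogram hD h1 h2 t).ncard_left, hindex]

theorem ncard_slab_layer (hc : Function.Injective c) (hD : 0 < D) (h1 : c P1 = (D, 0))
    (h2 : c P2 = (0, D))
    (hindex : ((Submodule.span ℤ (Set.range ![P1, P2])).toAddSubgroup.index : ℤ) = D) (k : ℕ) :
    ((slab c (k * D) (k * D + D)).ncard : ℤ) = (slab c 0 D).ncard + k * D := by
  induction k with
  | zero => simp
  | succ k ih =>
    have hpar := ncard_fundParallelogram hD h1 h2 hindex (k * D + D)
    have hfin : (fundParallelogram c D (k * D + D)).Finite :=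
      Set.finite_of_ncard_pos (by omega)
    rw [Nat.cast_succ, add_one_mul, slab_add_eq_vadd_union hD.le h1 (by positivity),
      Set.ncard_union_eq (disjoint_vadd_slab_fundParallelogram h1 _) (slab_finite hc _ _).vadd_set
        hfin, Set.ncard_vadd_set]
    push_cast
    linarith

theorem ncard_slab_zero (hc : Function.Injective c) (hD : 0 < D) (h1 : c P1 = (D, 0))
    (h2 : c P2 = (0, D))
    (hindex : ((Submodule.span ℤ (Set.range ![P1, P2])).toAddSubgroup.index : ℤ) = D) (k : ℕ) :
    ((slab c 0 (k * D)).ncard : ℚ) = k * (slab c 0 D).ncard + D * k * (k - 1) / 2 := by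
  induction k with
  | zero =>
    have hempty : slab c 0 0 = ∅ :=
      Set.eq_empty_of_forall_notMem fun P hP => by
        simp only [slab, Set.mem_ofPred_eq] at hP
        omega
    simp [hempty]
  | succ k ih =>
    have hlayer : ((slab c (k * D) (k * D + D)).ncard : ℚ) = (slab c 0 D).ncard + k * D := by
      exact_mod_cast ncard_slab_layer hc hD h1 h2 hindex k
    rw [Nat.cast_succ, add_one_mul, ← slab_union_slab (n := k * D) (by positivity) (by linarith),
      Set.ncard_union_eq (disjoint_slab_slab _ _ _) (slab_finite hc _ _) (slab_finite hc _ _)]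
    push_cast
    linear_combination ih + hlayer

end Counting

theorem index_span_pair_eq_natAbs_det {P1 P2 : ℤ × ℤ} (hli : LinearIndependent ℤ ![P1, P2]) :
    (Submodule.span ℤ (Set.range ![P1, P2])).toAddSubgroup.index =
      (P1.1 * P2.2 - P1.2 * P2.1).natAbs := by
  refine (Submodule.natAbs_det_basis_change (Module.Basis.finTwoProd ℤ) _
    (Module.Basis.span hli)).symm.trans ?_
  rw [Module.Basis.det_apply, Matrix.det_fin_two]
  simp [Module.Basis.toMatrix_apply, Module.Basis.span_apply, mul_comm]

/-- `coneCoords a1 b1 a2 b2 P = D • (s, t)` when `P = s • (a1, b1) + t • (a2, b2)`. -/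
def coneCoords (a1 b1 a2 b2 : ℤ) : ℤ × ℤ →+ ℤ × ℤ where
  toFun P := (a2 * P.2 - b2 * P.1, b1 * P.1 - a1 * P.2)
  map_zero' := by simp
  map_add' P Q := by ext <;> simp <;> ring

variable {a1 b1 a2 b2 : ℤ}

@[simp]
theorem coneCoords_apply (P : ℤ × ℤ) :
    coneCoords a1 b1 a2 b2 P = (a2 * P.2 - b2 * P.1, b1 * P.1 - a1 * P.2) :=
  rfl

theorem coneCoords_fst_vertex : coneCoords a1 b1 a2 b2 (a1, b1) = (a2 * b1 - a1 * b2, 0) := by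
  ext <;> simp <;> ring

theorem coneCoords_snd_vertex : coneCoords a1 b1 a2 b2 (a2, b2) = (0, a2 * b1 - a1 * b2) := by
  ext <;> simp <;> ring

theorem coneCoords_injective (hD : a2 * b1 - a1 * b2 ≠ 0) :
    Function.Injective (coneCoords a1 b1 a2 b2) := by
  refine (injective_iff_map_eq_zero _).mpr fun P hP => ?_
  simp only [coneCoords_apply, Prod.ext_iff, Prod.fst_zero, Prod.snd_zero] at hP
  have hx : (a2 * b1 - a1 * b2) * P.1 = 0 := by linear_combination a1 * hP.1 + a2 * hP.2
  have hy : (a2 * b1 - a1 * b2) * P.2 = 0 := by linear_combination b1 * hP.1 + b2 * hP.2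
  exact Prod.ext ((mul_eq_zero.mp hx).resolve_left hD) ((mul_eq_zero.mp hy).resolve_left hD)

theorem index_span_vertices (hD : 0 < a2 * b1 - a1 * b2) :
    ((Submodule.span ℤ (Set.range ![((a1, b1) : ℤ × ℤ), (a2, b2)])).toAddSubgroup.index : ℤ) =
      a2 * b1 - a1 * b2 := by
  rw [index_span_pair_eq_natAbs_det
    (linearIndependent_pair hD.ne' coneCoords_fst_vertex coneCoords_snd_vertex)]
  simp only
  rw [Int.natCast_natAbs, abs_of_neg (by linarith)]
  ring

theorem mem_MDelta_iff (hD : 0 < a2 * b1 - a1 * b2) (P : ℤ × ℤ) :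
    P ∈ MDelta a1 b1 a2 b2 ↔
      0 ≤ (coneCoords a1 b1 a2 b2 P).1 ∧ 0 ≤ (coneCoords a1 b1 a2 b2 P).2 := by
  have hDq : (0 : ℚ) < a2 * b1 - a1 * b2 := by exact_mod_cast hD
  simp only [MDelta, coneCoords_apply, Set.mem_ofPred_eq]
  constructor
  · rintro ⟨s, t, hs, ht, hx, hy⟩
    have hu : ((a2 * P.2 - b2 * P.1 : ℤ) : ℚ) = s * (a2 * b1 - a1 * b2) := by
      push_cast; rw [hx, hy]; ring
    have hv : ((b1 * P.1 - a1 * P.2 : ℤ) : ℚ) = t * (a2 * b1 - a1 * b2) := by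
      push_cast; rw [hx, hy]; ring
    constructor
    · exact_mod_cast hu ▸ mul_nonneg hs hDq.le
    · exact_mod_cast hv ▸ mul_nonneg ht hDq.le
  · rintro ⟨hu, hv⟩
    refine ⟨((a2 * P.2 - b2 * P.1 : ℤ) : ℚ) / (a2 * b1 - a1 * b2),
      ((b1 * P.1 - a1 * P.2 : ℤ) : ℚ) / (a2 * b1 - a1 * b2),
      div_nonneg (by exact_mod_cast hu) hDq.le, div_nonneg (by exact_mod_cast hv) hDq.le,
      ?_, ?_⟩ <;>
    · field_simp
      push_cast
      ring

theorem wt_lt_iff (hD : 0 < a2 * b1 - a1 * b2) (P : ℤ × ℤ) (n : ℤ) :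
    wt a1 b1 a2 b2 P < n ↔
      (coneCoords a1 b1 a2 b2 P).1 + (coneCoords a1 b1 a2 b2 P).2 < n * (a2 * b1 - a1 * b2) := by
  rw [wt, div_lt_iff₀ (by exact_mod_cast hD), ← Int.cast_mul, Int.cast_lt, coneCoords_apply]
  ring_nf

theorem setOf_mem_MDelta_wt_lt (hD : 0 < a2 * b1 - a1 * b2) (n : ℤ) :
    {P ∈ MDelta a1 b1 a2 b2 | wt a1 b1 a2 b2 P < n} =
      slab (coneCoords a1 b1 a2 b2) 0 (n * (a2 * b1 - a1 * b2)) := by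
  ext P
  simp only [mem_MDelta_iff hD, wt_lt_iff hD, slab, Set.mem_ofPred_eq]
  omega

end LatticeCone

theorem statement6_general (a1 b1 a2 b2 : ℤ)
    (hD : 0 < a2 * b1 - a1 * b2)
    (k : ℕ)
    (Tk T1 : Finset (ℤ × ℤ))
    (hTk : (Tk : Set (ℤ × ℤ)) =
      {P ∈ MDelta a1 b1 a2 b2 | wt a1 b1 a2 b2 P < (k : ℚ)})
    (hT1 : (T1 : Set (ℤ × ℤ)) =
      {P ∈ MDelta a1 b1 a2 b2 | wt a1 b1 a2 b2 P < 1}) :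
    (Tk.card : ℚ) = (k : ℚ) * T1.card +
      ((a2 * b1 - a1 * b2 : ℤ) : ℚ) * k * ((k : ℚ) - 1) / 2 := by
  rw [← Int.cast_natCast, LatticeCone.setOf_mem_MDelta_wt_lt hD] at hTk
  rw [← Int.cast_one, LatticeCone.setOf_mem_MDelta_wt_lt hD, one_mul] at hT1
  rw [← Set.ncard_coe_finset Tk, ← Set.ncard_coe_finset T1, hTk, hT1]
  exact LatticeCone.ncard_slab_zero (LatticeCone.coneCoords_injective hD.ne') hD
    LatticeCone.coneCoords_fst_vertex LatticeCone.coneCoords_snd_vertex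
    (LatticeCone.index_span_vertices hD) k

/-- For every integer `k ≥ 1`, the number `x_k` of lattice points
of `M(Δ)` of weight strictly less than `k` satisfies
`x_k = k·x_1 + D·k·(k-1)/2`. -/
theorem statement6 (a1 b1 a2 b2 : ℤ)
    (ha1 : 0 ≤ a1) (hb1 : 0 ≤ b1) (ha2 : 0 ≤ a2) (hb2 : 0 ≤ b2)
    (hD : 0 < a2 * b1 - a1 * b2)
    (k : ℕ) (hk : 1 ≤ k)
    (Tk T1 : Finset (ℤ × ℤ))
    (hTk : (Tk : Set (ℤ × ℤ)) =
      {P ∈ MDelta a1 b1 a2 b2 | wt a1 b1 a2 b2 P < (k : ℚ)})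
    (hT1 : (T1 : Set (ℤ × ℤ)) =
      {P ∈ MDelta a1 b1 a2 b2 | wt a1 b1 a2 b2 P < 1}) :
    (Tk.card : ℚ) = (k : ℚ) * T1.card +
      ((a2 * b1 - a1 * b2 : ℤ) : ℚ) * k * ((k : ℚ) - 1) / 2 :=
  statement6_general a1 b1 a2 b2 hD k Tk T1 hTk hT1
end
end

section
/- Let g := gcd(a1−a2, b1−b2) and let p be a prime with p > 2*D/g + 1. Let M' be a finite multiset of points of M(Δ) and let ℓ ≤ #M'. Among all sub-multisets of M' of cardinality ℓ, let S_min be one with minimal total weight Σ_{P∈S} w(P). Then for every sub-multiset S̃ of M' of cardinality ℓ: if Σ_{P∈S̃} w(P) = Σ_{P∈S_min} w(P) then h(S̃) = h(S_min), and if Σ_{P∈S̃} w(P) > Σ_{P∈S_min} w(P) then h(S̃) > h(S_min). In other words, the minimum of h over size-ℓ sub-multisets of M' is attained exactly at those sub-multisets whose total weight is minimal. -/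
/-!
By linearity of `w`, `h(S, τ) = Σ ⌈p·w(τ P) - w(P)⌉` only sees the weights of `S`, so we may index
`S` by increasing weight. The sorted weights of a minimal-weight `S_min` coincide with the smallest
weights of `M'`, hence lie pointwise below the sorted weights of any `S̃` of the same size; equal
total weight thus forces equal sorted weights and `h(S̃) = h(S_min)`.

If the sorted weights increase from `v` to `v' = v + δ` with `δ ≥ 0`, then for every `τ` the
`P`-th ceiling grows by at least `⌊p·δ(τ P)⌋ - ⌈δ(P)⌉`, and summing over `P` the permutation
disappears: `h` grows by at least `Σ (⌊p·δ⌋ - ⌈δ⌉)`. Weights lie in `(g/D)ℤ`, so every nonzero `δ`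
is at least `g/D`, and `p - 1 > 2D/g` gives `⌊p·δ⌋ - ⌈δ⌉ > (p - 1)·δ - 2 > 0`.
-/

open Finset

noncomputable section

section CeilCost

variable {K : Type*} [CommRing K] [LinearOrder K] [FloorRing K]

def ceilCost (p : ℤ) {n : ℕ} (v : Fin n → K) (τ : Equiv.Perm (Fin n)) : ℤ :=
  ∑ i, ⌈(p : K) * v (τ i) - v i⌉

def minCeilCost (p : ℤ) {n : ℕ} (v : Fin n → K) : ℤ :=
  ⨅ τ, ceilCost p v τ

theorem ceilCost_comp_equiv (p : ℤ) {n m : ℕ} (e : Fin n ≃ Fin m) (v : Fin m → K)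
    (τ : Equiv.Perm (Fin m)) : ceilCost p (v ∘ e) (e.symm.permCongr τ) = ceilCost p v τ := by
  simp only [ceilCost, Equiv.permCongr_apply, Equiv.symm_symm, Function.comp_apply,
    Equiv.apply_symm_apply]
  exact Equiv.sum_comp e fun j => ⌈(p : K) * v (τ j) - v j⌉

theorem minCeilCost_comp_equiv (p : ℤ) {n m : ℕ} (e : Fin n ≃ Fin m) (v : Fin m → K) :
    minCeilCost p (v ∘ e) = minCeilCost p v :=
  (e.symm.permCongr.iInf_comp).symm.trans (iInf_congr (ceilCost_comp_equiv p e v))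

variable [IsStrictOrderedRing K]

theorem ceil_add_floor_sub_ceil_le (x a b : K) : ⌈x⌉ + ⌊a⌋ - ⌈b⌉ ≤ ⌈x + (a - b)⌉ := by
  have h₁ : ⌊a⌋ - ⌈b⌉ ≤ ⌊a - b⌋ := by
    simpa [Int.floor_neg, sub_eq_add_neg] using Int.le_floor_add a (-b)
  have h₂ : ⌈x⌉ + ⌊a - b⌋ ≤ ⌈x + (a - b)⌉ := by
    rw [← Int.ceil_add_intCast]
    exact Int.ceil_mono (by linarith [Int.floor_le (a - b)])
  linarith

theorem floor_mul_sub_ceil_pos {p ε δ : K} (hε : 0 < ε) (hpε : 2 < (p - 1) * ε) (hδ : ε ≤ δ) :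
    0 < ⌊p * δ⌋ - ⌈δ⌉ := by
  have hp : 0 ≤ p - 1 := (pos_of_mul_pos_left (by linarith) hε.le).le
  have hpδ : (p - 1) * ε ≤ (p - 1) * δ := mul_le_mul_of_nonneg_left hδ hp
  have h : ((0 : ℤ) : K) < ((⌊p * δ⌋ - ⌈δ⌉ : ℤ) : K) := by
    push_cast
    linarith [Int.lt_floor_add_one (p * δ), Int.ceil_lt_add_one δ]
  exact_mod_cast h

variable (p : ℤ) {ε : K} {n : ℕ} {v v' : Fin n → K}

theorem ceilCost_lt_ceilCost (hε : 0 < ε) (hpε : 2 < ((p : K) - 1) * ε) (hle : v ≤ v')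
    (hgap : ∀ i, v i < v' i → v i + ε ≤ v' i) (hne : v ≠ v') (τ : Equiv.Perm (Fin n)) :
    ceilCost p v τ < ceilCost p v' τ := by
  set δ := v' - v
  have hgrow : ∀ i, ⌈(p : K) * v (τ i) - v i⌉ + ⌊(p : K) * δ (τ i)⌋ - ⌈δ i⌉ ≤
      ⌈(p : K) * v' (τ i) - v' i⌉ := fun i => by
    convert ceil_add_floor_sub_ceil_le ((p : K) * v (τ i) - v i) _ (δ i) using 2
    simp only [δ, Pi.sub_apply]
    ring
  have hδ : ∀ i, v i < v' i → ε ≤ δ i := fun i h => by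
    simp only [δ, Pi.sub_apply]
    linarith [hgap i h]
  have hpos : 0 < ∑ i, (⌊(p : K) * δ i⌋ - ⌈δ i⌉) := by
    obtain ⟨j, hj⟩ : ∃ j, v j ≠ v' j := by
      by_contra! h
      exact hne (funext h)
    refine sum_pos' (fun i _ => ?_)
      ⟨j, mem_univ j, floor_mul_sub_ceil_pos hε hpε (hδ j ((hle j).lt_of_ne hj))⟩
    rcases (hle i).lt_or_eq with h | h
    · exact (floor_mul_sub_ceil_pos hε hpε (hδ i h)).le
    · simp [δ, h]
  have hperm : ∑ i, (⌊(p : K) * δ (τ i)⌋ - ⌈δ i⌉) = ∑ i, (⌊(p : K) * δ i⌋ - ⌈δ i⌉) := by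
    rw [sum_sub_distrib, sum_sub_distrib, Equiv.sum_comp τ fun i => ⌊(p : K) * δ i⌋]
  calc ceilCost p v τ < ceilCost p v τ + ∑ i, (⌊(p : K) * δ (τ i)⌋ - ⌈δ i⌉) := by
        rw [hperm]
        exact lt_add_of_pos_right _ hpos
    _ ≤ ceilCost p v' τ := by
        rw [ceilCost, ← sum_add_distrib]
        exact sum_le_sum fun i _ => by linarith [hgrow i]

theorem minCeilCost_lt_minCeilCost (hε : 0 < ε) (hpε : 2 < ((p : K) - 1) * ε) (hle : v ≤ v')
    (hgap : ∀ i, v i < v' i → v i + ε ≤ v' i) (hne : v ≠ v') :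
    minCeilCost p v < minCeilCost p v' := by
  obtain ⟨τ, hτ⟩ := exists_eq_ciInf_of_finite (f := ceilCost p v')
  calc minCeilCost p v ≤ ceilCost p v τ := ciInf_le (Set.finite_range _).bddBelow τ
    _ < ceilCost p v' τ := ceilCost_lt_ceilCost p hε hpε hle hgap hne τ
    _ = minCeilCost p v' := hτ

end CeilCost

section Weights

variable {a1 b1 a2 b2 : ℤ}

theorem wt_smul_sub (p : ℤ) (P Q : ℤ × ℤ) :
    wt a1 b1 a2 b2 (p • Q - P) = p * wt a1 b1 a2 b2 Q - wt a1 b1 a2 b2 P := by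
  simp only [wt, div_eq_mul_inv, Prod.fst_sub, Prod.snd_sub, Prod.smul_fst, Prod.smul_snd,
    smul_eq_mul]
  push_cast
  ring

theorem gcd_pos_of_det_pos (hD : 0 < a2 * b1 - a1 * b2) : 0 < Int.gcd (a1 - a2) (b1 - b2) := by
  refine Nat.pos_of_ne_zero fun h => ?_
  obtain ⟨h₁, h₂⟩ := Int.gcd_eq_zero_iff.mp h
  obtain rfl : a1 = a2 := by omega
  obtain rfl : b1 = b2 := by omega
  simp at hD

theorem wt_add_gcd_div_le (hD : 0 < a2 * b1 - a1 * b2) {P Q : ℤ × ℤ}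
    (h : wt a1 b1 a2 b2 P < wt a1 b1 a2 b2 Q) :
    wt a1 b1 a2 b2 P + Int.gcd (a1 - a2) (b1 - b2) / ((a2 * b1 - a1 * b2 : ℤ) : ℚ) ≤
      wt a1 b1 a2 b2 Q := by
  set g := Int.gcd (a1 - a2) (b1 - b2)
  set N : ℤ × ℤ → ℤ := fun P => (b1 - b2) * P.1 + (a2 - a1) * P.2
  have hDq : (0 : ℚ) < ((a2 * b1 - a1 * b2 : ℤ) : ℚ) := by exact_mod_cast hD
  have hwt : ∀ P, wt a1 b1 a2 b2 P = N P / ((a2 * b1 - a1 * b2 : ℤ) : ℚ) := fun P => rfl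
  rw [hwt, hwt, div_lt_div_iff_of_pos_right hDq, Int.cast_lt] at h
  have hdvd : (g : ℤ) ∣ N Q - N P := by
    have e : N Q - N P = (b1 - b2) * (Q.1 - P.1) - (a1 - a2) * (Q.2 - P.2) := by
      simp only [N]
      ring
    rw [e]
    exact ((Int.gcd_dvd_right ..).mul_right _).sub ((Int.gcd_dvd_left ..).mul_right _)
  have hg : (g : ℤ) ≤ N Q - N P := Int.le_of_dvd (by omega) hdvd
  rw [hwt, hwt, ← add_div, div_le_div_iff_of_pos_right hDq]
  exact_mod_cast (by omega : N P + g ≤ N Q)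

end Weights

theorem hMin_eq_minCeilCost (p a1 b1 a2 b2 : ℤ) (S : Multiset (ℤ × ℤ)) :
    hMin p a1 b1 a2 b2 S = minCeilCost p (wt a1 b1 a2 b2 ∘ listFn S) := by
  simp only [hMin, hTau, minCeilCost, ceilCost, wt_smul_sub, inf'_univ_eq_ciInf]
  rfl

theorem exists_sorted_indexing (p a1 b1 a2 b2 : ℤ) {n : ℕ} (S : Multiset (ℤ × ℤ))
    (hS : Multiset.card S = n) :
    ∃ q : Fin n → ℤ × ℤ, univ.val.map q = S ∧ Monotone (wt a1 b1 a2 b2 ∘ q) ∧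
      hMin p a1 b1 a2 b2 S = minCeilCost p (wt a1 b1 a2 b2 ∘ q) := by
  have hn : n = S.toList.length := by rw [Multiset.length_toList, hS]
  set f := wt a1 b1 a2 b2 ∘ listFn S
  let e : Fin n ≃ Fin S.toList.length := (finCongr hn).trans (Tuple.sort f)
  refine ⟨listFn S ∘ e, ?_, (Tuple.monotone_sort f).comp fun i j h => h, ?_⟩
  · rw [← Multiset.map_map, Multiset.map_univ_val_equiv, Fin.univ_val_map, listFn,
      List.ofFn_get, Multiset.coe_toList]
  · rw [hMin_eq_minCeilCost]
    exact (minCeilCost_comp_equiv p e f).symm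

theorem Fin.val_le_of_strictMono {n : ℕ} {φ : Fin n → ℕ} (hφ : StrictMono φ) (i : Fin n) :
    (i : ℕ) ≤ φ i := by
  obtain ⟨k, hk⟩ := i
  induction k with
  | zero => exact Nat.zero_le _
  | succ k ih => exact Nat.succ_le_of_lt ((ih (by omega)).trans_lt (hφ (by simp [Fin.lt_def])))

theorem le_of_map_univ_le {α : Type*} [LinearOrder α] {n m : ℕ} (h : n ≤ m) {v : Fin n → α}
    {u : Fin m → α} (hv : Monotone v) (hu : Monotone u) (hvu : univ.val.map v ≤ univ.val.map u)
    (i : Fin n) : u (Fin.castLE h i) ≤ v i := by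
  rw [Fin.univ_val_map, Fin.univ_val_map, Multiset.coe_le] at hvu
  obtain ⟨f, hf⟩ := List.sublist_iff_exists_fin_orderEmbedding_get_eq.mp
    (List.sublist_of_subperm_of_sortedLE hvu (List.sortedLE_ofFn_iff.mpr hv)
      (List.sortedLE_ofFn_iff.mpr hu))
  set i' : Fin (List.ofFn v).length := Fin.cast List.length_ofFn.symm i
  have hvi := hf i'
  rw [List.get_ofFn, List.get_ofFn] at hvi
  rw [show v i = _ from hvi]
  exact hu (Fin.val_le_of_strictMono (φ := fun j => (f j : ℕ)) (fun a b hab => f.strictMono hab) i')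

theorem sorted_le_of_sum_minimal {α β : Type*} [AddCommMonoid β] [LinearOrder β]
    [IsOrderedCancelAddMonoid β] (w : α → β) {M Smin St : Multiset α} {l m : ℕ}
    {qM : Fin m → α} {qm qt : Fin l → α}
    (hqM : univ.val.map qM = M) (hM : Monotone (w ∘ qM))
    (hqm : univ.val.map qm = Smin) (hm : Monotone (w ∘ qm))
    (hqt : univ.val.map qt = St) (ht : Monotone (w ∘ qt))
    (hsub : Smin ≤ M) (hsubt : St ≤ M)
    (hmin : ∀ S ≤ M, Multiset.card S = l → (Smin.map w).sum ≤ (S.map w).sum) :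
    w ∘ qm ≤ w ∘ qt := by
  subst hqM hqm hqt
  have hl : l ≤ m := by simpa using Multiset.card_le_card hsub
  have hdom : ∀ {q : Fin l → α}, Monotone (w ∘ q) → univ.val.map q ≤ univ.val.map qM →
      ∀ i, w (qM (Fin.castLE hl i)) ≤ w (q i) := by
    intro q hq hS i
    refine le_of_map_univ_le hl hq hM ?_ i
    simpa only [Multiset.map_map] using Multiset.map_le_map (f := w) hS
  have hlightest : univ.val.map (qM ∘ Fin.castLE hl) ≤ univ.val.map qM := by
    rw [← Multiset.map_map]
    exact Multiset.map_le_map ((Multiset.le_iff_subset (univ.nodup.map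
      (Fin.castLE_injective hl))).mpr fun x _ => mem_univ x)
  have hle : ∑ i, w (qm i) ≤ ∑ i, w (qM (Fin.castLE hl i)) := by
    simpa only [Multiset.map_map, sum_map_val, Function.comp_apply] using
      hmin _ hlightest (by simp)
  have heq := (sum_eq_sum_iff_of_le fun i _ => hdom hm hsub i).mp
    (le_antisymm (sum_le_sum fun i _ => hdom hm hsub i) hle)
  intro i
  rw [Function.comp_apply, ← heq i (mem_univ i)]
  exact hdom ht hsubt i

theorem statement9_general (p a1 b1 a2 b2 : ℤ)
    (hD : 0 < a2 * b1 - a1 * b2)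
    (hpg : 2 * ((a2 * b1 - a1 * b2 : ℤ) : ℚ) /
      (Int.gcd (a1 - a2) (b1 - b2) : ℚ) + 1 < (p : ℚ))
    (M' : Multiset (ℤ × ℤ))
    (l : ℕ)
    (Smin : Multiset (ℤ × ℤ)) (hsub : Smin ≤ M')
    (hcard : Multiset.card Smin = l)
    (hmin : ∀ S ≤ M', Multiset.card S = l →
      (Smin.map (wt a1 b1 a2 b2)).sum ≤ (S.map (wt a1 b1 a2 b2)).sum)
    (St : Multiset (ℤ × ℤ)) (hsubt : St ≤ M') (hcardt : Multiset.card St = l) :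
    ((St.map (wt a1 b1 a2 b2)).sum = (Smin.map (wt a1 b1 a2 b2)).sum →
      hMin p a1 b1 a2 b2 St = hMin p a1 b1 a2 b2 Smin) ∧
    ((Smin.map (wt a1 b1 a2 b2)).sum < (St.map (wt a1 b1 a2 b2)).sum →
      hMin p a1 b1 a2 b2 Smin < hMin p a1 b1 a2 b2 St) := by
  set w := wt a1 b1 a2 b2
  have hDq : (0 : ℚ) < ((a2 * b1 - a1 * b2 : ℤ) : ℚ) := by exact_mod_cast hD
  have hg : (0 : ℚ) < Int.gcd (a1 - a2) (b1 - b2) := by exact_mod_cast gcd_pos_of_det_pos hD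
  set D : ℚ := ((a2 * b1 - a1 * b2 : ℤ) : ℚ)
  set g : ℚ := (Int.gcd (a1 - a2) (b1 - b2) : ℚ)
  have hpε : 2 < ((p : ℚ) - 1) * (g / D) := by
    have := (div_lt_iff₀ hg).mp (by linarith : 2 * D / g < p - 1)
    rw [← mul_div_assoc, lt_div_iff₀ hDq]
    linarith
  obtain ⟨qM, hqM, hM, -⟩ := exists_sorted_indexing p a1 b1 a2 b2 M' rfl
  obtain ⟨qm, rfl, hm, hhm⟩ := exists_sorted_indexing p a1 b1 a2 b2 Smin hcard
  obtain ⟨qt, rfl, ht, hht⟩ := exists_sorted_indexing p a1 b1 a2 b2 St hcardt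
  have hle := sorted_le_of_sum_minimal w hqM hM rfl hm rfl ht hsub hsubt hmin
  rw [hhm, hht]
  simp only [Multiset.map_map, sum_map_val]
  refine ⟨fun hw => ?_, fun hw => ?_⟩
  · have heq := (sum_eq_sum_iff_of_le fun i _ => hle i).mp hw.symm
    rw [show w ∘ qt = w ∘ qm from funext fun i => (heq i (mem_univ i)).symm]
  · exact minCeilCost_lt_minCeilCost p (div_pos hg hDq) hpε hle
      (fun _ h => wt_add_gcd_div_le hD h) fun h => hw.ne (by rw [h])

/-- Let `g = gcd(a1-a2, b1-b2)` and let `p` be a prime with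
`p > 2·D/g + 1`.  Among the sub-multisets of `M'` of cardinality `ℓ`, the
minimum of `h` is attained exactly at those of minimal total weight. -/
theorem statement9 (p a1 b1 a2 b2 : ℤ)
    (ha1 : 0 ≤ a1) (hb1 : 0 ≤ b1) (ha2 : 0 ≤ a2) (hb2 : 0 ≤ b2)
    (hD : 0 < a2 * b1 - a1 * b2)
    (hp : Prime p)
    (hpg : 2 * ((a2 * b1 - a1 * b2 : ℤ) : ℚ) /
      (Int.gcd (a1 - a2) (b1 - b2) : ℚ) + 1 < (p : ℚ))
    (M' : Multiset (ℤ × ℤ)) (hM' : ∀ P ∈ M', P ∈ MDelta a1 b1 a2 b2)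
    (l : ℕ) (hl : l ≤ Multiset.card M')
    (Smin : Multiset (ℤ × ℤ)) (hsub : Smin ≤ M')
    (hcard : Multiset.card Smin = l)
    (hmin : ∀ S ≤ M', Multiset.card S = l →
      (Smin.map (wt a1 b1 a2 b2)).sum ≤ (S.map (wt a1 b1 a2 b2)).sum)
    (St : Multiset (ℤ × ℤ)) (hsubt : St ≤ M') (hcardt : Multiset.card St = l) :
    ((St.map (wt a1 b1 a2 b2)).sum = (Smin.map (wt a1 b1 a2 b2)).sum →
      hMin p a1 b1 a2 b2 St = hMin p a1 b1 a2 b2 Smin) ∧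
    ((Smin.map (wt a1 b1 a2 b2)).sum < (St.map (wt a1 b1 a2 b2)).sum →
      hMin p a1 b1 a2 b2 Smin < hMin p a1 b1 a2 b2 St) :=
  statement9_general p a1 b1 a2 b2 hD hpg M' l Smin hsub hcard hmin St hsubt hcardt
end
end

section
/- If P ∈ Y0 and (i,j) ∈ ℤ² are such that the point P + p0*(i,j) lies in Y, then P + p0*(i,j) lies in Y0. -/
noncomputable section

/-- Componentwise residue modulo `d`: `P% = (x mod d, y mod d)`. -/
def resd (d : ℤ) (P : ℤ × ℤ) : ℤ × ℤ := (P.1 % d, P.2 % d)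

/-- `T1 = {(x,y) ∈ ℤ² : x,y ≥ 0, x+y < d}`. -/
def T1set (d : ℤ) : Set (ℤ × ℤ) := {P | 0 ≤ P.1 ∧ 0 ≤ P.2 ∧ P.1 + P.2 < d}

/-- `Y = {(x,y) ∈ ℤ² : 0 < x < d, 0 < y < d, x+y > d}`. -/
def Yset (d : ℤ) : Set (ℤ × ℤ) :=
  {P | 0 < P.1 ∧ P.1 < d ∧ 0 < P.2 ∧ P.2 < d ∧ d < P.1 + P.2}

/-- `Y0 = {(p·P)% : P ∈ T1, (p·P)% ∉ T1}`, the image of `T_{1,2}` under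
`P ↦ (p·P)%`. -/
def Y0set (d p : ℤ) : Set (ℤ × ℤ) :=
  {Q | ∃ P ∈ T1set d, resd d (p • P) ∉ T1set d ∧ Q = resd d (p • P)}

/-- The mirror reflection `m(P) = (d,d) - P`. -/
def mref (d : ℤ) (P : ℤ × ℤ) : ℤ × ℤ := (d - P.1, d - P.2)

/-- The fundamental cell `𝒞 = {(x,y) : d-p0 ≤ x ≤ d-1, d-p0 ≤ y ≤ d-1}`. -/
def Cset (d p0 : ℤ) : Set (ℤ × ℤ) :=
  {P | d - p0 ≤ P.1 ∧ P.1 ≤ d - 1 ∧ d - p0 ≤ P.2 ∧ P.2 ≤ d - 1}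

/-- `𝒞0 = 𝒞 ∩ Y0`. -/
def C0set (d p p0 : ℤ) : Set (ℤ × ℤ) := Cset d p0 ∩ Y0set d p

/-- If `P ∈ Y0` and `(i,j) ∈ ℤ²` are such that `P + p0·(i,j)`
lies in `Y`, then `P + p0·(i,j)` lies in `Y0`. -/
theorem statement13 (d p p0 : ℤ) (hd : 0 < d) (hp : Prime p)
    (hp2 : 2 * d + 1 < p) (hpd : ¬ p ∣ d) (hp0 : p0 = p % d)
    (h6 : 6 * p0 < d)
    (P : ℤ × ℤ) (hP : P ∈ Y0set d p) (i j : ℤ)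
    (hY : P + p0 • ((i, j) : ℤ × ℤ) ∈ Yset d) :
    P + p0 • ((i, j) : ℤ × ℤ) ∈ Y0set d p := by
  obtain ⟨⟨x, y⟩, ⟨hx, hy, hxy⟩, hnot, hPeq⟩ := hP
  simp only [T1set, Set.mem_setOf_eq] at hx hy hxy ⊢
  have hp0nn : 0 ≤ p0 := hp0 ▸ Int.emod_nonneg p hd.ne'
  rcases eq_or_lt_of_le hp0nn with h0 | hp0pos
  · have hz : p0 • ((i, j) : ℤ × ℤ) = 0 := by rw [← h0]; simp
    rw [hz, add_zero]
    exact ⟨(x, y), ⟨hx, hy, hxy⟩, hnot, hPeq⟩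
  -- main case
  have hmod : Int.ModEq d p p0 := by
    unfold Int.ModEq
    rw [hp0, Int.emod_emod_of_dvd _ dvd_rfl]
  have hPval : P = (p * x % d, p * y % d) := by
    rw [hPeq]; simp [resd, Prod.smul_mk, smul_eq_mul]
  subst hPval
  simp only [Yset, Set.mem_setOf_eq, Prod.smul_mk, smul_eq_mul, Prod.mk_add_mk] at hY
  obtain ⟨hA1, hA2, hB1, hB2, hAB⟩ := hY
  have hXe : p * x % d = p0 * x % d := hmod.mul_right x
  have hYe : p * y % d = p0 * y % d := hmod.mul_right y
  have hsum : d ≤ p * x % d + p * y % d := by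
    by_contra hc
    push_neg at hc
    refine hnot ?_
    simp only [T1set, Set.mem_setOf_eq, resd, Prod.smul_mk, smul_eq_mul]
    exact ⟨Int.emod_nonneg _ hd.ne', Int.emod_nonneg _ hd.ne', hc⟩
  set x' := (x + i) % d with hx'def
  set y' := (y + j) % d with hy'def
  set k := p0 * x / d with hk
  set l := p0 * y / d with hl
  set k' := p0 * x' / d with hk'
  set l' := p0 * y' / d with hl'
  have hXd : p0 * x % d = p0 * x - d * k := Int.emod_def _ _
  have hYd : p0 * y % d = p0 * y - d * l := Int.emod_def _ _
  have hX'd : p0 * x' % d = p0 * x' - d * k' := Int.emod_def _ _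
  have hY'd : p0 * y' % d = p0 * y' - d * l' := Int.emod_def _ _
  have hx'm : x' % d = (x + i) % d := Int.emod_emod_of_dvd _ dvd_rfl
  have hy'm : y' % d = (y + j) % d := Int.emod_emod_of_dvd _ dvd_rfl
  have ekey : p0 * x' % d = p * x % d + p0 * i := by
    have h1 : p0 * x' % d = (p0 * x % d + p0 * i) % d := by
      have hc : Int.ModEq d (p0 * x') (p0 * x % d + p0 * i) := by
        calc p0 * x' ≡ p0 * (x + i) [ZMOD d] := Int.ModEq.mul_left p0 hx'm
          _ = p0 * x + p0 * i := by ring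
          _ ≡ p0 * x % d + p0 * i [ZMOD d] :=
            Int.ModEq.add_right _ (Int.emod_emod_of_dvd _ dvd_rfl).symm
      exact hc
    rw [h1, ← hXe, Int.emod_eq_of_lt (le_of_lt hA1) hA2]
  have ekey2 : p0 * y' % d = p * y % d + p0 * j := by
    have h1 : p0 * y' % d = (p0 * y % d + p0 * j) % d := by
      have hc : Int.ModEq d (p0 * y') (p0 * y % d + p0 * j) := by
        calc p0 * y' ≡ p0 * (y + j) [ZMOD d] := Int.ModEq.mul_left p0 hy'm
          _ = p0 * y + p0 * j := by ring
          _ ≡ p0 * y % d + p0 * j [ZMOD d] :=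
            Int.ModEq.add_right _ (Int.emod_emod_of_dvd _ dvd_rfl).symm
      exact hc
    rw [h1, ← hYe, Int.emod_eq_of_lt (le_of_lt hB1) hB2]
  have hx'0 : 0 ≤ x' := Int.emod_nonneg _ hd.ne'
  have hx'd : x' < d := Int.emod_lt_of_pos _ hd
  have hy'0 : 0 ≤ y' := Int.emod_nonneg _ hd.ne'
  have hy'd : y' < d := Int.emod_lt_of_pos _ hd
  have hXlt : p0 * x % d < d := Int.emod_lt_of_pos _ hd
  have hYlt : p0 * y % d < d := Int.emod_lt_of_pos _ hd
  have hX'lt : p0 * x' % d < d := Int.emod_lt_of_pos _ hd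
  have hY'lt : p0 * y' % d < d := Int.emod_lt_of_pos _ hd
  have hXnn : 0 ≤ p0 * x % d := Int.emod_nonneg _ hd.ne'
  have hYnn : 0 ≤ p0 * y % d := Int.emod_nonneg _ hd.ne'
  have hX'nn : 0 ≤ p0 * x' % d := Int.emod_nonneg _ hd.ne'
  have hY'nn : 0 ≤ p0 * y' % d := Int.emod_nonneg _ hd.ne'
  have hk0 : 0 ≤ k := Int.ediv_nonneg (mul_nonneg hp0nn hx) hd.le
  have hl0 : 0 ≤ l := Int.ediv_nonneg (mul_nonneg hp0nn hy) hd.le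
  have hk'0 : 0 ≤ k' := Int.ediv_nonneg (mul_nonneg hp0nn hx'0) hd.le
  have hl'0 : 0 ≤ l' := Int.ediv_nonneg (mul_nonneg hp0nn hy'0) hd.le
  have hk'p : k' < p0 := by
    have h1 : d * k' ≤ p0 * x' := by linarith [hX'd, hX'nn]
    have h2 : p0 * x' < p0 * d := mul_lt_mul_of_pos_left hx'd hp0pos
    have h3 : d * k' < d * p0 := by
      calc d * k' ≤ p0 * x' := h1
        _ < p0 * d := h2
        _ = d * p0 := mul_comm p0 d
    exact lt_of_mul_lt_mul_left h3 hd.le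
  have hl'p : l' < p0 := by
    have h1 : d * l' ≤ p0 * y' := by linarith [hY'd, hY'nn]
    have h2 : p0 * y' < p0 * d := mul_lt_mul_of_pos_left hy'd hp0pos
    have h3 : d * l' < d * p0 := by
      calc d * l' ≤ p0 * y' := h1
        _ < p0 * d := h2
        _ = d * p0 := mul_comm p0 d
    exact lt_of_mul_lt_mul_left h3 hd.le
  have hkp : k < p0 := by
    have h1 : d * k ≤ p0 * x := by linarith [hXd, hXnn]
    have h2 : p0 * x < p0 * d := mul_lt_mul_of_pos_left (by linarith) hp0pos
    have h3 : d * k < d * p0 := by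
      calc d * k ≤ p0 * x := h1
        _ < p0 * d := h2
        _ = d * p0 := mul_comm p0 d
    exact lt_of_mul_lt_mul_left h3 hd.le
  have hlp : l < p0 := by
    have h1 : d * l ≤ p0 * y := by linarith [hYd, hYnn]
    have h2 : p0 * y < p0 * d := mul_lt_mul_of_pos_left (by linarith) hp0pos
    have h3 : d * l < d * p0 := by
      calc d * l ≤ p0 * y := h1
        _ < p0 * d := h2
        _ = d * p0 := mul_comm p0 d
    exact lt_of_mul_lt_mul_left h3 hd.le
  have hxm : x' = x + i - d * ((x + i) / d) := Int.emod_def _ _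
  have hym : y' = y + j - d * ((y + j) / d) := Int.emod_def _ _
  have hkk : k' = k := by
    set m := (x + i) / d with hm
    have e1 : p0 * x' - d * k' = p0 * x - d * k + p0 * i := by
      rw [← hX'd, ekey, hXe, hXd]
    have e3 : k' = k - p0 * m := by
      have e2 : d * k' = d * (k - p0 * m) := by linear_combination p0 * hxm - e1
      exact mul_left_cancel₀ hd.ne' e2
    have hm0 : m = 0 := by
      rcases lt_trichotomy m 0 with h | h | h
      · exfalso
        have : p0 * m ≤ p0 * (-1) := mul_le_mul_of_nonneg_left (by omega) hp0nn
        linarith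
      · exact h
      · exfalso
        have : p0 * 1 ≤ p0 * m := mul_le_mul_of_nonneg_left (by omega) hp0nn
        linarith
    rw [e3, hm0, mul_zero, sub_zero]
  have hll : l' = l := by
    set m := (y + j) / d with hm
    have e1 : p0 * y' - d * l' = p0 * y - d * l + p0 * j := by
      rw [← hY'd, ekey2, hYe, hYd]
    have e3 : l' = l - p0 * m := by
      have e2 : d * l' = d * (l - p0 * m) := by linear_combination p0 * hym - e1
      exact mul_left_cancel₀ hd.ne' e2
    have hm0 : m = 0 := by
      rcases lt_trichotomy m 0 with h | h | h
      · exfalso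
        have : p0 * m ≤ p0 * (-1) := mul_le_mul_of_nonneg_left (by omega) hp0nn
        linarith
      · exact h
      · exfalso
        have : p0 * 1 ≤ p0 * m := mul_le_mul_of_nonneg_left (by omega) hp0nn
        linarith
    rw [e3, hm0, mul_zero, sub_zero]
  have hsum2 : d * (k + l + 1) ≤ p0 * x + p0 * y := by
    have h1 : d ≤ p0 * x - d * k + (p0 * y - d * l) := by
      rw [← hXd, ← hYd, ← hXe, ← hYe]; exact hsum
    linarith
  have hklp : k + l + 2 ≤ p0 := by
    have h2 : p0 * (x + y) ≤ p0 * (d - 1) :=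
      mul_le_mul_of_nonneg_left (by linarith) hp0nn
    have h3 : d * (k + l + 1) < d * p0 := by
      have e : p0 * (x + y) = p0 * x + p0 * y := by ring
      have e2 : p0 * (d - 1) = p0 * d - p0 := by ring
      have e3 : p0 * d = d * p0 := mul_comm _ _
      linarith
    have := lt_of_mul_lt_mul_left h3 hd.le
    omega
  have hfin : x' + y' < d := by
    have h1 : p0 * x' < d * (k + 1) := by
      have h := hX'lt; rw [hX'd, hkk] at h
      have e : d * (k + 1) = d * k + d := by ring
      linarith
    have h2 : p0 * y' < d * (l + 1) := by
      have h := hY'lt; rw [hY'd, hll] at h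
      have e : d * (l + 1) = d * l + d := by ring
      linarith
    have h3 : d * (k + l + 2) ≤ d * p0 := mul_le_mul_of_nonneg_left hklp hd.le
    have h4 : p0 * (x' + y') < p0 * d := by
      have e : p0 * (x' + y') = p0 * x' + p0 * y' := by ring
      have e2 : d * (k + l + 2) = d * (k + 1) + d * (l + 1) := by ring
      have e3 : p0 * d = d * p0 := mul_comm _ _
      linarith
    exact lt_of_mul_lt_mul_left h4 hp0nn
  refine ⟨(x', y'), ⟨hx'0, hy'0, hfin⟩, ?_, ?_⟩
  · intro hmem
    simp only [T1set, Set.mem_setOf_eq, resd, Prod.smul_mk, smul_eq_mul] at hmem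
    obtain ⟨-, -, hlt⟩ := hmem
    rw [hmod.mul_right x', hmod.mul_right y', ekey, ekey2] at hlt
    linarith
  · simp only [resd, Prod.smul_mk, smul_eq_mul, Prod.mk_add_mk, Prod.mk.injEq]
    rw [hmod.mul_right x', hmod.mul_right y', ekey, ekey2]
    exact ⟨rfl, rfl⟩
end
end

section
/- Every point of Y0 is of the form Q + p0*(i,j) for some point Q ∈ 𝒞0 and some pair of integers (i,j); that is, Y0 is distributed periodically in Y with period p0, generated by the points of the fundamental cell. -/
noncomputable section

/-- Every point of `Y0` is of the form `Q + p0·(i,j)` for some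
point `Q ∈ 𝒞0` and integers `i, j`; `Y0` is `p0`-periodically distributed in
`Y`, generated by the points of the fundamental cell. -/
theorem statement14 (d p p0 : ℤ) (hd : 0 < d) (hp : Prime p)
    (hp2 : 2 * d + 1 < p) (hpd : ¬ p ∣ d) (hp0 : p0 = p % d)
    (h6 : 6 * p0 < d) :
    ∀ P ∈ Y0set d p, ∃ Q ∈ C0set d p p0, ∃ i j : ℤ,
      P = Q + p0 • ((i, j) : ℤ × ℤ) := by
  intro P hP
  obtain ⟨R, hR, hnot, hQ⟩ := hP
  obtain ⟨x, y⟩ := R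
  obtain ⟨hx0, hy0, hxy⟩ := hR
  simp only at hx0 hy0 hxy
  by_cases hd1 : d = 1
  · exfalso
    apply hnot
    subst hd1
    refine ⟨?_, ?_, ?_⟩ <;> simp [resd, Int.emod_one]
  have hp0nn : 0 ≤ p0 := hp0 ▸ Int.emod_nonneg p (by omega)
  have hp0pos : 0 < p0 := by
    rcases hp0nn.lt_or_eq with h | h
    · exact h
    · exfalso
      have hdvd : d ∣ p := Int.dvd_of_emod_eq_zero (by omega)
      have hnat := Int.prime_iff_natAbs_prime.mp hp
      have hdn : d.natAbs ∣ p.natAbs := Int.natAbs_dvd_natAbs.mpr hdvd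
      have hda : (d.natAbs : ℤ) = d := Int.natAbs_of_nonneg hd.le
      have hpa : (p.natAbs : ℤ) = p := Int.natAbs_of_nonneg (by omega)
      rcases hnat.eq_one_or_self_of_dvd _ hdn with h' | h' <;> omega
  -- key residues
  set a := p0 * x % d with ha_def
  set b := p0 * y % d with hb_def
  have hmod : ∀ z : ℤ, p * z % d = p0 * z % d := by
    intro z
    rw [Int.mul_emod p z, Int.mul_emod p0 z, hp0, Int.emod_emod_of_dvd p dvd_rfl]
  have hres : ∀ z w : ℤ, resd d (p • ((z, w) : ℤ × ℤ)) = (p0 * z % d, p0 * w % d) := by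
    intro z w
    simp [resd, Prod.smul_def, smul_eq_mul, hmod]
  have ha0 : 0 ≤ a := Int.emod_nonneg _ (by omega)
  have had : a < d := Int.emod_lt_of_pos _ hd
  have hb0 : 0 ≤ b := Int.emod_nonneg _ (by omega)
  have hbd : b < d := Int.emod_lt_of_pos _ hd
  rw [hres] at hnot hQ
  have hab : d ≤ a + b := by
    by_contra hcon
    push_neg at hcon
    exact hnot ⟨ha0, hb0, hcon⟩
  -- division data
  set kx := p0 * x / d with hkx_def
  set ky := p0 * y / d with hky_def
  have hx1 : a + d * kx = p0 * x := Int.emod_add_mul_ediv _ _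
  have hy1 : b + d * ky = p0 * y := Int.emod_add_mul_ediv _ _
  set s := (d - 1 - a) / p0 with hs_def
  set t := (d - 1 - b) / p0 with ht_def
  set rs := (d - 1 - a) % p0 with hrs_def
  set rt := (d - 1 - b) % p0 with hrt_def
  have hs1 : rs + p0 * s = d - 1 - a := Int.emod_add_mul_ediv _ _
  have ht1 : rt + p0 * t = d - 1 - b := Int.emod_add_mul_ediv _ _
  have hrs0 : 0 ≤ rs := Int.emod_nonneg _ (by omega)
  have hrsp : rs < p0 := Int.emod_lt_of_pos _ hp0pos
  have hrt0 : 0 ≤ rt := Int.emod_nonneg _ (by omega)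
  have hrtp : rt < p0 := Int.emod_lt_of_pos _ hp0pos
  have hs0 : 0 ≤ s := Int.ediv_nonneg (by omega) hp0pos.le
  have ht0 : 0 ≤ t := Int.ediv_nonneg (by omega) hp0pos.le
  have hsum : a + b + d * (kx + ky) = p0 * (x + y) := by linear_combination hx1 + hy1
  -- the key inequality
  have hkey : x + s + (y + t) < d := by
    have h1 : p0 * (x + y) ≤ p0 * (d - 1) :=
      mul_le_mul_of_nonneg_left (by omega) hp0pos.le
    have h2 : d * (kx + ky) < d * (p0 - 1) := by nlinarith [hsum, h1, hab]
    have hk2 : kx + ky ≤ p0 - 2 := by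
      have := lt_of_mul_lt_mul_left h2 hd.le
      omega
    rcases lt_or_ge (kx + ky) (p0 - 2) with hcase | hcase
    · have h3 : p0 * (x + s + (y + t)) < p0 * d := by
        have hKle : kx + ky ≤ p0 - 3 := by omega
        have h4 : d * (kx + ky) ≤ d * (p0 - 3) :=
          mul_le_mul_of_nonneg_left hKle hd.le
        nlinarith [hsum, hs1, ht1, h4, hrs0, hrt0]
      exact lt_of_mul_lt_mul_left h3 hp0pos.le
    · have hK : kx + ky = p0 - 2 := by omega
      have hM : p0 * (x + y + s + t + 2 - d) = 2 * p0 - 2 - rs - rt := by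
        linear_combination -hx1 - hy1 + hs1 + ht1 + d * hK
      have hM2 : x + y + s + t + 2 - d < 2 := by
        have h5 : p0 * (x + y + s + t + 2 - d) < p0 * 2 := by linarith
        exact lt_of_mul_lt_mul_left h5 hp0pos.le
      omega
  -- assemble
  refine ⟨(a + p0 * s, b + p0 * t),
    ⟨⟨show d - p0 ≤ a + p0 * s by linarith, show a + p0 * s ≤ d - 1 by linarith,
      show d - p0 ≤ b + p0 * t by linarith, show b + p0 * t ≤ d - 1 by linarith⟩,
    (x + s, y + t), ⟨show (0:ℤ) ≤ x + s by omega, show (0:ℤ) ≤ y + t by omega,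
      show x + s + (y + t) < d from hkey⟩, ?_, ?_⟩, -s, -t, ?_⟩
  · rw [hres]
    intro hmem
    obtain ⟨-, -, h3⟩ := hmem
    simp only at h3
    have e1 : p0 * (x + s) % d = a + p0 * s := by
      have hre : p0 * (x + s) = a + p0 * s + d * kx := by linear_combination -hx1
      rw [hre, Int.add_mul_emod_self_left, Int.emod_eq_of_lt (by linarith) (by linarith)]
    have e2 : p0 * (y + t) % d = b + p0 * t := by
      have hre : p0 * (y + t) = b + p0 * t + d * ky := by linear_combination -hy1
      rw [hre, Int.add_mul_emod_self_left, Int.emod_eq_of_lt (by linarith) (by linarith)]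
    rw [e1, e2] at h3
    linarith
  · rw [hres]
    have e1 : p0 * (x + s) % d = a + p0 * s := by
      have hre : p0 * (x + s) = a + p0 * s + d * kx := by linear_combination -hx1
      rw [hre, Int.add_mul_emod_self_left, Int.emod_eq_of_lt (by linarith) (by linarith)]
    have e2 : p0 * (y + t) % d = b + p0 * t := by
      have hre : p0 * (y + t) = b + p0 * t + d * ky := by linear_combination -hy1
      rw [hre, Int.add_mul_emod_self_left, Int.emod_eq_of_lt (by linarith) (by linarith)]
    rw [e1, e2]
  · rw [hQ]
    simp only [Prod.mk_add_mk, Prod.smul_mk, smul_eq_mul, Prod.ext_iff]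
    constructor <;> ring
end
end
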